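/- arXiv:2412.06907 — 3 statements merged into one kernel-verified Lean document; each statement's English description precedes it below -/
import Mathlib

section
/- Let F : ℝ → ℝ vanish on (-∞, 0), be nondecreasing and right-continuous, and suppose the Laplace–Stieltjes integral g(t) = ∫₀⁻^∞ e^{-tv} dF(v) is finite for every t > 0. If for some Δ > 0 one has lim_{t → 0⁺} t^Δ · g(t) = 1, then lim_{Λ → ∞} Λ^{-Δ} · Γ(Δ+1) · F(Λ) = 1. -/
/-!
Karamata's proof. With `x = e^{-tv}`, the hypothesis applied at `(n + 1) t` says that
`t^Δ ∫ x^n · x dF(v) → (n + 1)^{-Δ} = Γ(Δ)⁻¹ ∫₀^∞ e^{-ns} · e^{-s} s^{Δ-1} ds`.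
By linearity and Weierstrass approximation on `[0, 1]` this extends to
`t^Δ ∫ G(x) · x dF(v) → Γ(Δ)⁻¹ ∫₀^∞ G(e^{-s}) · e^{-s} s^{Δ-1} ds` for every continuous `G`.
Now `F(1/t) = ∫ 1_{tv ≤ 1} dF(v)`, and `1_{s ≤ 1}` lies between the continuous ramps of the
form `G(e^{-s}) e^{-s}` that fall from `1` to `0` on `[1 - δ, 1]` and on `[1, 1 + δ]`. Their
limits are bounded by `Γ(Δ)⁻¹ ∫₀^{1 ± δ} s^{Δ-1} ds = (1 ± δ)^Δ / Γ(Δ + 1)`, which squeezes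
`t^Δ F(1/t)` to `1 / Γ(Δ + 1)`.
-/

open MeasureTheory Filter Topology Set Real

noncomputable def karamataTransform (μ : Measure ℝ) (Δ : ℝ) (G : ℝ → ℝ) (t : ℝ) : ℝ :=
  t ^ Δ * ∫ v, G (exp (-t * v)) * exp (-t * v) ∂μ

noncomputable def karamataLimit (Δ : ℝ) (G : ℝ → ℝ) : ℝ :=
  (∫ s in Ioi 0, G (exp (-s)) * (exp (-s) * s ^ (Δ - 1))) / Gamma Δ

section WeightedIntegral

variable {α : Type*} [MeasurableSpace α] {ν : Measure α} {x w : α → ℝ} {G H : ℝ → ℝ}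

lemma integrable_comp_mul_of_mem_Icc (hG : Continuous G) (hx : Measurable x)
    (hxI : ∀ᵐ a ∂ν, x a ∈ Icc 0 1) (hw : Integrable w ν) :
    Integrable (fun a => G (x a) * w a) ν := by
  obtain ⟨C, hC⟩ := isCompact_Icc.exists_bound_of_continuousOn (hG.continuousOn (s := Icc 0 1))
  exact hw.bdd_mul (hG.measurable.comp hx).aestronglyMeasurable
    (hxI.mono fun a ha => hC _ ha)

lemma integral_comp_mul_add (hG : Continuous G) (hH : Continuous H) (hx : Measurable x)
    (hxI : ∀ᵐ a ∂ν, x a ∈ Icc 0 1) (hw : Integrable w ν) :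
    ∫ a, (G (x a) + H (x a)) * w a ∂ν = ∫ a, G (x a) * w a ∂ν + ∫ a, H (x a) * w a ∂ν := by
  simp_rw [add_mul]
  exact integral_add (integrable_comp_mul_of_mem_Icc hG hx hxI hw)
    (integrable_comp_mul_of_mem_Icc hH hx hxI hw)

lemma abs_integral_comp_mul_sub_le {ε : ℝ} (hG : Continuous G) (hH : Continuous H)
    (hx : Measurable x) (hxI : ∀ᵐ a ∂ν, x a ∈ Icc 0 1) (hw : Integrable w ν)
    (hw₀ : ∀ᵐ a ∂ν, 0 ≤ w a) (hGH : ∀ y ∈ Icc (0 : ℝ) 1, |G y - H y| ≤ ε) :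
    |∫ a, G (x a) * w a ∂ν - ∫ a, H (x a) * w a ∂ν| ≤ ε * ∫ a, w a ∂ν := by
  rw [← integral_sub (integrable_comp_mul_of_mem_Icc hG hx hxI hw)
    (integrable_comp_mul_of_mem_Icc hH hx hxI hw), ← integral_const_mul]
  refine (abs_integral_le_integral_abs).trans (integral_mono_ae ?_ (hw.const_mul ε) ?_)
  · exact ((integrable_comp_mul_of_mem_Icc hG hx hxI hw).sub
      (integrable_comp_mul_of_mem_Icc hH hx hxI hw)).abs
  · filter_upwards [hxI, hw₀] with a ha hwa
    rw [← sub_mul, abs_mul, abs_of_nonneg hwa]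
    exact mul_le_mul_of_nonneg_right (hGH _ ha) hwa

end WeightedIntegral

lemma exp_neg_mul_mem_Icc {t v : ℝ} (ht : 0 ≤ t) (hv : 0 ≤ v) : exp (-t * v) ∈ Icc (0 : ℝ) 1 :=
  ⟨(exp_pos _).le, exp_le_one_iff.2 (by nlinarith)⟩

section Transform

variable {μ : Measure ℝ} {Δ t : ℝ} {G H : ℝ → ℝ}

lemma karamataTransform_add (hμ : ∀ᵐ v ∂μ, 0 ≤ v)
    (hint : ∀ t : ℝ, 0 < t → Integrable (fun v => exp (-t * v)) μ) (hG : Continuous G)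
    (hH : Continuous H) (ht : 0 < t) :
    karamataTransform μ Δ (fun y => G y + H y) t =
      karamataTransform μ Δ G t + karamataTransform μ Δ H t := by
  rw [karamataTransform, karamataTransform, karamataTransform, ← mul_add,
    integral_comp_mul_add hG hH (by fun_prop) (hμ.mono fun v hv => exp_neg_mul_mem_Icc ht.le hv)
      (hint t ht)]

lemma abs_karamataTransform_sub_le {ε : ℝ} (hμ : ∀ᵐ v ∂μ, 0 ≤ v)
    (hint : ∀ t : ℝ, 0 < t → Integrable (fun v => exp (-t * v)) μ) (hG : Continuous G)
    (hH : Continuous H) (hGH : ∀ y ∈ Icc (0 : ℝ) 1, |G y - H y| ≤ ε) (ht : 0 < t) :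
    |karamataTransform μ Δ G t - karamataTransform μ Δ H t| ≤
      ε * (t ^ Δ * ∫ v, exp (-t * v) ∂μ) := by
  have htΔ : 0 < t ^ Δ := rpow_pos_of_pos ht Δ
  rw [karamataTransform, karamataTransform, ← mul_sub, abs_mul, abs_of_pos htΔ, mul_left_comm]
  exact mul_le_mul_of_nonneg_left (abs_integral_comp_mul_sub_le hG hH (by fun_prop)
    (hμ.mono fun v hv => exp_neg_mul_mem_Icc ht.le hv) (hint t ht)
    (ae_of_all _ fun v => (exp_pos _).le) hGH) htΔ.le

lemma karamataTransform_monomial (n : ℕ) (c : ℝ) (ht : 0 ≤ t) :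
    karamataTransform μ Δ (fun y => c * y ^ n) t =
      c * (1 / (n + 1)) ^ Δ * (((n + 1) * t) ^ Δ * ∫ v, exp (-((n + 1) * t) * v) ∂μ) := by
  have hexp : ∀ v, c * exp (-t * v) ^ n * exp (-t * v) = c * exp (-((n + 1) * t) * v) := by
    intro v
    rw [mul_assoc, ← exp_nat_mul, ← exp_add]
    ring_nf
  have hscale : (1 / (n + 1) : ℝ) ^ Δ * (n + 1) ^ Δ = 1 := by
    rw [← mul_rpow (by positivity) (by positivity), one_div_mul_cancel (by positivity), one_rpow]
  rw [karamataTransform, funext hexp, integral_const_mul, mul_rpow (by positivity) ht]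
  linear_combination (-(c * t ^ Δ * ∫ v, exp (-((n + 1) * t) * v) ∂μ)) * hscale

end Transform

section Limit

variable {Δ : ℝ} {G H : ℝ → ℝ}

lemma ae_exp_neg_mem_Icc : ∀ᵐ s ∂volume.restrict (Ioi 0), exp (-s) ∈ Icc (0 : ℝ) 1 :=
  (ae_restrict_mem measurableSet_Ioi).mono fun _ hs =>
    ⟨(exp_pos _).le, exp_le_one_iff.2 (neg_nonpos.2 (le_of_lt hs))⟩

lemma integrableOn_comp_exp_neg_mul_gammaIntegrand (hΔ : 0 < Δ) (hG : Continuous G) :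
    IntegrableOn (fun s => G (exp (-s)) * (exp (-s) * s ^ (Δ - 1))) (Ioi 0) :=
  integrable_comp_mul_of_mem_Icc hG (by fun_prop) ae_exp_neg_mem_Icc (GammaIntegral_convergent hΔ)

lemma karamataLimit_add (hΔ : 0 < Δ) (hG : Continuous G) (hH : Continuous H) :
    karamataLimit Δ (fun y => G y + H y) = karamataLimit Δ G + karamataLimit Δ H := by
  rw [karamataLimit, karamataLimit, karamataLimit, ← add_div,
    integral_comp_mul_add hG hH (by fun_prop) ae_exp_neg_mem_Icc (GammaIntegral_convergent hΔ)]

lemma abs_karamataLimit_sub_le {ε : ℝ} (hΔ : 0 < Δ) (hG : Continuous G) (hH : Continuous H)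
    (hGH : ∀ y ∈ Icc (0 : ℝ) 1, |G y - H y| ≤ ε) :
    |karamataLimit Δ G - karamataLimit Δ H| ≤ ε := by
  have hΓ := Gamma_pos_of_pos hΔ
  rw [karamataLimit, karamataLimit, ← sub_div, abs_div, abs_of_pos hΓ, div_le_iff₀ hΓ,
    Gamma_eq_integral hΔ]
  exact abs_integral_comp_mul_sub_le hG hH (by fun_prop) ae_exp_neg_mem_Icc
    (GammaIntegral_convergent hΔ)
    ((ae_restrict_mem measurableSet_Ioi).mono fun s hs =>
      mul_nonneg (exp_pos _).le (rpow_nonneg (le_of_lt hs) _)) hGH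

lemma karamataLimit_monomial (hΔ : 0 < Δ) (n : ℕ) (c : ℝ) :
    karamataLimit Δ (fun y => c * y ^ n) = c * (1 / (n + 1)) ^ Δ := by
  have hexp : ∀ s, c * exp (-s) ^ n * (exp (-s) * s ^ (Δ - 1)) =
      c * (s ^ (Δ - 1) * exp (-((n + 1) * s))) := by
    intro s
    have : exp (-s) ^ n * exp (-s) = exp (-((n + 1) * s)) := by
      rw [← exp_nat_mul, ← exp_add]
      ring_nf
    rw [← this]
    ring
  rw [karamataLimit, funext hexp, integral_const_mul,
    integral_rpow_mul_exp_neg_mul_Ioi hΔ (by positivity),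
    mul_div_assoc, mul_div_cancel_right₀ _ (Gamma_pos_of_pos hΔ).ne']

end Limit

lemma tendsto_const_mul_nhdsGT_zero {c : ℝ} (hc : 0 < c) :
    Tendsto (fun t => c * t) (𝓝[>] 0) (𝓝[>] 0) := by
  refine tendsto_nhdsWithin_iff.2 ⟨?_, eventually_mem_nhdsWithin.mono fun t ht => mul_pos hc ht⟩
  simpa using ((continuous_const_mul c).tendsto 0).mono_left nhdsWithin_le_nhds

section Convergence

variable {μ : Measure ℝ} {Δ : ℝ}
  (hμ : ∀ᵐ v ∂μ, 0 ≤ v) (hint : ∀ t : ℝ, 0 < t → Integrable (fun v => exp (-t * v)) μ)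
  (hΔ : 0 < Δ)
  (hlim : Tendsto (fun t : ℝ => t ^ Δ * ∫ v, exp (-t * v) ∂μ) (𝓝[>] 0) (𝓝 1))
include hμ hint hΔ hlim

lemma tendsto_karamataTransform_polynomial (p : Polynomial ℝ) :
    Tendsto (karamataTransform μ Δ fun y => p.eval y) (𝓝[>] 0)
      (𝓝 (karamataLimit Δ fun y => p.eval y)) := by
  induction p using Polynomial.induction_on' with
  | add p q hp hq =>
    simp only [Polynomial.eval_add]
    rw [karamataLimit_add hΔ p.continuous q.continuous]
    refine (hp.add hq).congr' (eventually_mem_nhdsWithin.mono fun t ht => ?_)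
    exact (karamataTransform_add hμ hint p.continuous q.continuous ht).symm
  | monomial n c =>
    simp only [Polynomial.eval_monomial]
    rw [karamataLimit_monomial hΔ, ← mul_one (c * _)]
    have hscaled := hlim.comp (tendsto_const_mul_nhdsGT_zero (c := n + 1) (by positivity))
    refine (hscaled.const_mul _).congr' (eventually_mem_nhdsWithin.mono fun t ht => ?_)
    exact (karamataTransform_monomial n c (le_of_lt ht)).symm

theorem tendsto_karamataTransform {G : ℝ → ℝ} (hG : Continuous G) :
    Tendsto (karamataTransform μ Δ G) (𝓝[>] 0) (𝓝 (karamataLimit Δ G)) := by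
  refine Metric.tendsto_nhds.2 fun ε hε => ?_
  obtain ⟨p, hp⟩ := exists_polynomial_near_of_continuousOn 0 1 G hG.continuousOn (ε / 4)
    (by positivity)
  have hpG : ∀ y ∈ Icc (0 : ℝ) 1, |p.eval y - G y| ≤ ε / 4 := fun y hy => (hp y hy).le
  have hlimit := abs_karamataLimit_sub_le hΔ p.continuous hG hpG
  filter_upwards [eventually_mem_nhdsWithin, hlim.eventually (eventually_lt_nhds one_lt_two),
    Metric.tendsto_nhds.1 (tendsto_karamataTransform_polynomial hμ hint hΔ hlim p) (ε / 4)
      (by positivity)] with t ht hbound hpoly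
  have htransform := abs_karamataTransform_sub_le (Δ := Δ) hμ hint p.continuous hG hpG ht
  have : ε / 4 * (t ^ Δ * ∫ v, exp (-t * v) ∂μ) < ε / 2 := by nlinarith
  rw [Real.dist_eq, abs_lt] at hpoly ⊢
  rw [abs_le] at hlimit htransform
  constructor <;> linarith [hpoly.1, hpoly.2, hlimit.1, hlimit.2, htransform.1, htransform.2]

end Convergence

section Cutoff

variable {a b x α β : ℝ}

noncomputable def ramp (a b x : ℝ) : ℝ := max 0 (min 1 ((x - a) / (b - a)))

lemma continuous_ramp (a b : ℝ) : Continuous (ramp a b) := by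
  unfold ramp
  fun_prop

lemma ramp_nonneg : 0 ≤ ramp a b x := le_max_left _ _

lemma ramp_le_one : ramp a b x ≤ 1 := max_le zero_le_one (min_le_left _ _)

lemma ramp_eq_zero_of_le (hab : a < b) (hx : x ≤ a) : ramp a b x = 0 :=
  max_eq_left <| (min_le_right _ _).trans <|
    div_nonpos_of_nonpos_of_nonneg (by linarith) (by linarith)

lemma ramp_eq_one_of_le (hab : a < b) (hx : b ≤ x) : ramp a b x = 1 := by
  have : 1 ≤ (x - a) / (b - a) := by rw [le_div_iff₀ (by linarith)]; linarith
  simp [ramp, min_eq_left this]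

/-- Dividing by `max x (exp (-β))` instead of `x` keeps the function continuous at `0`, where
the numerator vanishes anyway. -/
noncomputable def expCutoff (α β x : ℝ) : ℝ := ramp (exp (-β)) (exp (-α)) x / max x (exp (-β))

lemma continuous_expCutoff (α β : ℝ) : Continuous (expCutoff α β) :=
  (continuous_ramp _ _).div (continuous_id.max continuous_const) fun _ =>
    ((exp_pos _).trans_le (le_max_right _ _)).ne'

lemma expCutoff_mul_self (hαβ : α < β) (x : ℝ) :
    expCutoff α β x * x = ramp (exp (-β)) (exp (-α)) x := by
  rcases le_or_gt x (exp (-β)) with hx | hx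
  · simp [expCutoff, ramp_eq_zero_of_le (exp_lt_exp.2 (neg_lt_neg hαβ)) hx]
  · rw [expCutoff, max_eq_left hx.le, div_mul_cancel₀ _ ((exp_pos _).trans hx).ne']

lemma indicator_Iic_le_expCutoff (hαβ : α < β) (s : ℝ) :
    (Iic α).indicator 1 s ≤ expCutoff α β (exp (-s)) * exp (-s) := by
  rw [expCutoff_mul_self hαβ]
  by_cases hs : s ∈ Iic α
  · rw [indicator_of_mem hs, ramp_eq_one_of_le (exp_lt_exp.2 (neg_lt_neg hαβ))
      (exp_le_exp.2 (neg_le_neg (mem_Iic.1 hs)))]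
    rfl
  · rw [indicator_of_notMem hs]
    exact ramp_nonneg

lemma expCutoff_le_indicator_Iic (hαβ : α < β) (s : ℝ) :
    expCutoff α β (exp (-s)) * exp (-s) ≤ (Iic β).indicator 1 s := by
  rw [expCutoff_mul_self hαβ]
  by_cases hs : s ∈ Iic β
  · rw [indicator_of_mem hs]
    exact ramp_le_one
  · rw [indicator_of_notMem hs, ramp_eq_zero_of_le (exp_lt_exp.2 (neg_lt_neg hαβ))
      (exp_le_exp.2 (by linarith [not_le.1 (mt mem_Iic.2 hs)]))]

end Cutoff

section LimitBounds

variable {Δ : ℝ} {G : ℝ → ℝ}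

lemma indicator_Iic_mul_rpow_eq (β : ℝ) :
    (fun s => (Iic β).indicator 1 s * s ^ (Δ - 1)) = (Iic β).indicator fun s => s ^ (Δ - 1) := by
  ext s
  by_cases hs : s ∈ Iic β <;> simp [hs]

lemma integrableOn_indicator_Iic_mul_rpow (hΔ : 0 < Δ) (β : ℝ) :
    IntegrableOn (fun s => (Iic β).indicator 1 s * s ^ (Δ - 1)) (Ioi 0) := by
  rw [indicator_Iic_mul_rpow_eq, integrableOn_indicator_iff measurableSet_Iic, inter_comm,
    Ioi_inter_Iic]
  exact (intervalIntegral.intervalIntegrable_rpow' (by linarith)).1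

lemma integral_indicator_Iic_mul_rpow (hΔ : 0 < Δ) {β : ℝ} (hβ : 0 ≤ β) :
    ∫ s in Ioi 0, (Iic β).indicator 1 s * s ^ (Δ - 1) = β ^ Δ / Δ := by
  rw [indicator_Iic_mul_rpow_eq, setIntegral_indicator measurableSet_Iic, Ioi_inter_Iic,
    ← intervalIntegral.integral_of_le hβ, integral_rpow (Or.inl (by linarith)),
    sub_add_cancel, zero_rpow hΔ.ne', sub_zero]

lemma karamataLimit_le (hΔ : 0 < Δ) (hG : Continuous G) {β : ℝ} (hβ : 0 ≤ β)
    (h : ∀ s > 0, G (exp (-s)) * exp (-s) ≤ (Iic β).indicator 1 s) :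
    karamataLimit Δ G ≤ β ^ Δ / Gamma (Δ + 1) := by
  rw [Gamma_add_one hΔ.ne', ← div_div, karamataLimit, ← integral_indicator_Iic_mul_rpow hΔ hβ]
  refine div_le_div_of_nonneg_right (setIntegral_mono_on ?_
    (integrableOn_indicator_Iic_mul_rpow hΔ β) measurableSet_Ioi fun s hs => ?_)
    (Gamma_pos_of_pos hΔ).le
  · exact integrableOn_comp_exp_neg_mul_gammaIntegrand hΔ hG
  · rw [← mul_assoc]
    exact mul_le_mul_of_nonneg_right (h s hs) (rpow_nonneg (le_of_lt hs) _)

lemma le_karamataLimit (hΔ : 0 < Δ) (hG : Continuous G) {α : ℝ} (hα : 0 ≤ α)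
    (h : ∀ s > 0, (Iic α).indicator 1 s ≤ G (exp (-s)) * exp (-s)) :
    α ^ Δ / Gamma (Δ + 1) ≤ karamataLimit Δ G := by
  rw [Gamma_add_one hΔ.ne', ← div_div, karamataLimit, ← integral_indicator_Iic_mul_rpow hΔ hα]
  refine div_le_div_of_nonneg_right (setIntegral_mono_on
    (integrableOn_indicator_Iic_mul_rpow hΔ α) ?_ measurableSet_Ioi fun s hs => ?_)
    (Gamma_pos_of_pos hΔ).le
  · exact integrableOn_comp_exp_neg_mul_gammaIntegrand hΔ hG
  · rw [← mul_assoc]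
    exact mul_le_mul_of_nonneg_right (h s hs) (rpow_nonneg (le_of_lt hs) _)

end LimitBounds

section Sandwich

variable {μ : Measure ℝ} {Δ t : ℝ} {G : ℝ → ℝ}

lemma integrable_indicator_Iic_of_integrable_exp_neg
    (hint : Integrable (fun v => exp (-1 * v)) μ) (c : ℝ) :
    Integrable ((Iic c).indicator (1 : ℝ → ℝ)) μ := by
  refine (hint.const_mul (exp c)).mono'
    (measurable_const.indicator measurableSet_Iic).aestronglyMeasurable (ae_of_all _ fun v => ?_)
  by_cases hv : v ∈ Iic c
  · rw [indicator_of_mem hv, ← exp_add, Pi.one_apply, norm_one, one_le_exp_iff]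
    linarith [mem_Iic.1 hv]
  · rw [indicator_of_notMem hv, norm_zero]
    positivity

lemma indicator_Iic_inv (ht : 0 < t) (v : ℝ) :
    (Iic t⁻¹).indicator (1 : ℝ → ℝ) v = (Iic 1).indicator 1 (t * v) := by
  simp only [indicator, mem_Iic, inv_eq_one_div, le_div_iff₀' ht, Pi.one_apply]

lemma rpow_mul_measureReal_Iic_inv_le (hμ : ∀ᵐ v ∂μ, 0 ≤ v)
    (hint : ∀ t : ℝ, 0 < t → Integrable (fun v => exp (-t * v)) μ) (hG : Continuous G)
    (hGt : ∀ s ≥ 0, (Iic 1).indicator 1 s ≤ G (exp (-s)) * exp (-s)) (ht : 0 < t) :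
    t ^ Δ * μ.real (Iic t⁻¹) ≤ karamataTransform μ Δ G t := by
  rw [karamataTransform, ← integral_indicator_one measurableSet_Iic]
  refine mul_le_mul_of_nonneg_left (integral_mono_of_nonneg
    (ae_of_all _ fun v => indicator_nonneg (fun _ _ => zero_le_one) v)
    (integrable_comp_mul_of_mem_Icc hG (by fun_prop)
      (hμ.mono fun v hv => exp_neg_mul_mem_Icc ht.le hv) (hint t ht)) ?_) (by positivity)
  filter_upwards [hμ] with v hv
  rw [indicator_Iic_inv ht, neg_mul]
  exact hGt _ (mul_nonneg ht.le hv)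

lemma karamataTransform_le_rpow_mul_measureReal_Iic_inv (hμ : ∀ᵐ v ∂μ, 0 ≤ v)
    (hint : ∀ t : ℝ, 0 < t → Integrable (fun v => exp (-t * v)) μ) (hG : Continuous G)
    (hGt : ∀ s ≥ 0, G (exp (-s)) * exp (-s) ≤ (Iic 1).indicator 1 s) (ht : 0 < t) :
    karamataTransform μ Δ G t ≤ t ^ Δ * μ.real (Iic t⁻¹) := by
  rw [karamataTransform, ← integral_indicator_one measurableSet_Iic]
  refine mul_le_mul_of_nonneg_left (integral_mono_ae
    (integrable_comp_mul_of_mem_Icc hG (by fun_prop)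
      (hμ.mono fun v hv => exp_neg_mul_mem_Icc ht.le hv) (hint t ht))
    (integrable_indicator_Iic_of_integrable_exp_neg (hint 1 one_pos) _) ?_) (by positivity)
  filter_upwards [hμ] with v hv
  rw [indicator_Iic_inv ht, neg_mul]
  exact hGt _ (mul_nonneg ht.le hv)

end Sandwich

theorem tendsto_rpow_mul_measureReal_Iic_inv {μ : Measure ℝ} {Δ : ℝ} (hμ : ∀ᵐ v ∂μ, 0 ≤ v)
    (hint : ∀ t : ℝ, 0 < t → Integrable (fun v => exp (-t * v)) μ) (hΔ : 0 < Δ)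
    (hlim : Tendsto (fun t : ℝ => t ^ Δ * ∫ v, exp (-t * v) ∂μ) (𝓝[>] 0) (𝓝 1)) :
    Tendsto (fun t => t ^ Δ * μ.real (Iic t⁻¹)) (𝓝[>] 0) (𝓝 (Gamma (Δ + 1))⁻¹) := by
  have hbound : Tendsto (fun δ : ℝ => (1 + δ) ^ Δ / Gamma (Δ + 1)) (𝓝 0)
      (𝓝 (Gamma (Δ + 1))⁻¹) := by
    have : Continuous fun δ : ℝ => (1 + δ) ^ Δ / Gamma (Δ + 1) :=
      ((continuous_const.add continuous_id).rpow_const fun _ => Or.inr hΔ.le).div_const _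
    simpa using this.tendsto 0
  rw [tendsto_order]
  refine ⟨fun a ha => ?_, fun b hb => ?_⟩
  · obtain ⟨δ, hδa, hδ⟩ := ((hbound.eventually (lt_mem_nhds ha)).filter_mono nhdsWithin_le_nhds
      |>.and (Ioo_mem_nhdsLT (show (-1 : ℝ) < 0 by norm_num))).exists
    have hlower : a < karamataLimit Δ (expCutoff (1 + δ) 1) :=
      hδa.trans_le (le_karamataLimit hΔ (continuous_expCutoff _ _) (by linarith [hδ.1])
        fun s _ => indicator_Iic_le_expCutoff (by linarith [hδ.2]) s)
    filter_upwards [eventually_mem_nhdsWithin, (tendsto_karamataTransform hμ hint hΔ hlim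
      (continuous_expCutoff _ _)).eventually (lt_mem_nhds hlower)] with t ht hK
    exact hK.trans_le (karamataTransform_le_rpow_mul_measureReal_Iic_inv hμ hint
      (continuous_expCutoff _ _) (fun s _ => expCutoff_le_indicator_Iic (by linarith [hδ.2]) s) ht)
  · obtain ⟨δ, hδb, hδ⟩ := ((hbound.eventually (gt_mem_nhds hb)).filter_mono nhdsWithin_le_nhds
      |>.and (self_mem_nhdsWithin (s := Ioi 0))).exists
    have hupper : karamataLimit Δ (expCutoff 1 (1 + δ)) < b :=
      (karamataLimit_le hΔ (continuous_expCutoff _ _) (by linarith [hδ])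
        fun s _ => expCutoff_le_indicator_Iic (by linarith [hδ]) s).trans_lt hδb
    filter_upwards [eventually_mem_nhdsWithin, (tendsto_karamataTransform hμ hint hΔ hlim
      (continuous_expCutoff _ _)).eventually (gt_mem_nhds hupper)] with t ht hK
    exact (rpow_mul_measureReal_Iic_inv_le hμ hint (continuous_expCutoff _ _)
      (fun s _ => indicator_Iic_le_expCutoff (by linarith [hδ]) s) ht).trans_lt hK

namespace StieltjesFunction

variable {f : StieltjesFunction ℝ}

lemma tendsto_atBot_of_eq_zero_of_neg (hneg : ∀ x < (0 : ℝ), f x = 0) :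
    Tendsto f atBot (𝓝 0) :=
  tendsto_const_nhds.congr' ((eventually_lt_atBot 0).mono fun x hx => (hneg x hx).symm)

lemma measureReal_Iic_of_eq_zero_of_neg (hneg : ∀ x < (0 : ℝ), f x = 0) (x : ℝ) :
    f.measure.real (Iic x) = f x := by
  have hfx : 0 ≤ f x := by
    rcases lt_or_ge x 0 with hx | hx
    · exact (hneg x hx).ge
    · exact (hneg (-1) (by norm_num)).symm.le.trans (f.mono (by linarith))
  rw [measureReal_def, f.measure_Iic (tendsto_atBot_of_eq_zero_of_neg hneg), sub_zero,
    ENNReal.toReal_ofReal hfx]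

lemma ae_nonneg_of_eq_zero_of_neg (hneg : ∀ x < (0 : ℝ), f x = 0) :
    ∀ᵐ v ∂f.measure, 0 ≤ v := by
  have hleft : Tendsto f (𝓝[<] 0) (𝓝 0) :=
    tendsto_const_nhds.congr' (eventually_mem_nhdsWithin.mono fun x hx => (hneg x hx).symm)
  simp only [ae_iff, not_le]
  change f.measure (Iio 0) = 0
  rw [f.measure_Iio (tendsto_atBot_of_eq_zero_of_neg hneg),
    leftLim_eq_of_tendsto hleft, sub_zero, ENNReal.ofReal_zero]

end StieltjesFunction

/-- Hardy–Littlewood Tauberian theorem for the Laplace–Stieltjes transform. -/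
theorem hardy_littlewood_tauberian
    (f : StieltjesFunction ℝ) (hneg : ∀ x < (0 : ℝ), f x = 0)
    (hint : ∀ t : ℝ, 0 < t → Integrable (fun v => Real.exp (-t * v)) f.measure)
    (Δ : ℝ) (hΔ : 0 < Δ)
    (hlim : Tendsto (fun t : ℝ => t ^ Δ * ∫ v, Real.exp (-t * v) ∂f.measure)
      (𝓝[>] (0 : ℝ)) (𝓝 1)) :
    Tendsto (fun Λ : ℝ => Λ ^ (-Δ) * Real.Gamma (Δ + 1) * f Λ) atTop (𝓝 1) := by
  have hΓ : Gamma (Δ + 1) ≠ 0 := (Gamma_pos_of_pos (by linarith)).ne'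
  have hmeasure := ((tendsto_rpow_mul_measureReal_Iic_inv (f.ae_nonneg_of_eq_zero_of_neg hneg)
    hint hΔ hlim).comp tendsto_inv_atTop_nhdsGT_zero).const_mul (Gamma (Δ + 1))
  rw [mul_inv_cancel₀ hΓ] at hmeasure
  refine hmeasure.congr' ?_
  filter_upwards [eventually_gt_atTop 0] with Λ hΛ
  rw [Function.comp_apply, inv_inv, f.measureReal_Iic_of_eq_zero_of_neg hneg,
    inv_rpow hΛ.le, ← rpow_neg hΛ.le]
  ring
end

section
/- Let F : ℝ → ℝ vanish on (-∞, 0), be right-continuous and of locally bounded variation, and suppose the Laplace–Stieltjes integral g(t) = ∫₀⁻^∞ e^{-tv} dF(v) converges for every t > 0. If for some Δ > 0 one has lim_{Λ → ∞} Λ^{-Δ} Γ(Δ+1) F(Λ) = 1, then lim_{t → 0⁺} t^Δ g(t) = 1. -/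
open MeasureTheory Filter Topology Set Real
open scoped ENNReal

/-!
Writing `e^{-tv} = ∫_v^∞ t e^{-ts} ds` and applying Tonelli, the Laplace–Stieltjes transform of a
monotone part `f` becomes the ordinary Laplace transform `∫ t e^{-ts} f(s) ds`; substituting
`s = x / t` gives `t^Δ g(t) = ∫₀^∞ t^Δ F(x/t) e^{-x} dx`. The integrand tends pointwise to
`x^Δ e^{-x} / Γ(Δ+1)`, and boundedness of `F` on compacts together with `F(Λ) = O(Λ^Δ)` dominates
it by `(C + K x^Δ) e^{-x}` for `t ≤ 1`, so dominated convergence gives the limit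
`∫₀^∞ x^Δ e^{-x} dx / Γ(Δ+1) = 1`.
-/

theorem lintegral_lintegral_Ici_eq_lintegral_mul_measure_Iic (μ ν : Measure ℝ) [SFinite μ]
    [SFinite ν] {ψ : ℝ → ℝ≥0∞} (hψ : Measurable ψ) :
    ∫⁻ v, ∫⁻ s in Ici v, ψ s ∂ν ∂μ = ∫⁻ s, ψ s * μ (Iic s) ∂ν := by
  have hle : MeasurableSet {p : ℝ × ℝ | p.1 ≤ p.2} :=
    measurableSet_le measurable_fst measurable_snd
  calc ∫⁻ v, ∫⁻ s in Ici v, ψ s ∂ν ∂μ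
      = ∫⁻ v, ∫⁻ s, {p : ℝ × ℝ | p.1 ≤ p.2}.indicator (fun p => ψ p.2) (v, s) ∂ν ∂μ := by
        refine lintegral_congr fun v => ?_
        rw [← lintegral_indicator measurableSet_Ici]
        rfl
    _ = ∫⁻ s, ∫⁻ v, {p : ℝ × ℝ | p.1 ≤ p.2}.indicator (fun p => ψ p.2) (v, s) ∂μ ∂ν :=
        lintegral_lintegral_swap ((hψ.comp measurable_snd).indicator hle).aemeasurable
    _ = ∫⁻ s, ψ s * μ (Iic s) ∂ν := by
        refine lintegral_congr fun s => ?_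
        rw [← setLIntegral_const, ← lintegral_indicator measurableSet_Iic]
        rfl

theorem integral_Ioi_mul_exp_neg_mul {t : ℝ} (ht : 0 < t) (v : ℝ) :
    ∫ s in Ioi v, t * exp (-t * s) = exp (-t * v) := by
  rw [integral_const_mul, integral_exp_mul_Ioi (neg_neg_of_pos ht)]
  field_simp

theorem ofReal_exp_neg_mul_eq_lintegral_Ici {t : ℝ} (ht : 0 < t) (v : ℝ) :
    ENNReal.ofReal (exp (-t * v)) = ∫⁻ s in Ici v, ENNReal.ofReal (t * exp (-t * s)) := by
  have hint : IntegrableOn (fun s => t * exp (-t * s)) (Ici v) := by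
    rw [integrableOn_Ici_iff_integrableOn_Ioi]
    exact (integrableOn_exp_mul_Ioi (neg_neg_of_pos ht) v).const_mul t
  rw [← integral_Ioi_mul_exp_neg_mul ht v, ← integral_Ici_eq_integral_Ioi,
    ofReal_integral_eq_lintegral_ofReal hint (ae_of_all _ fun s => by positivity)]

namespace StieltjesFunction

variable (f : StieltjesFunction ℝ) {t : ℝ}

theorem lintegral_exp_neg_mul (hf : Tendsto f atBot (𝓝 0)) (ht : 0 < t) :
    ∫⁻ v, ENNReal.ofReal (exp (-t * v)) ∂f.measure =
      ∫⁻ s, ENNReal.ofReal (t * exp (-t * s) * f s) := by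
  simp_rw [ofReal_exp_neg_mul_eq_lintegral_Ici ht]
  rw [lintegral_lintegral_Ici_eq_lintegral_mul_measure_Iic _ _ (by fun_prop)]
  refine lintegral_congr fun s => ?_
  rw [f.measure_Iic hf, sub_zero, ← ENNReal.ofReal_mul (by positivity)]

theorem integral_exp_neg_mul (hf : Tendsto f atBot (𝓝 0)) (ht : 0 < t) :
    ∫ v, exp (-t * v) ∂f.measure = ∫ s, t * exp (-t * s) * f s := by
  have hf0 : ∀ s, 0 ≤ f s := f.mono.le_of_tendsto hf
  have hfm : Measurable f := f.mono.measurable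
  rw [integral_eq_lintegral_of_nonneg_ae (ae_of_all _ fun v => (exp_pos _).le) (by fun_prop),
    integral_eq_lintegral_of_nonneg_ae (ae_of_all _ fun s => by have := hf0 s; positivity)
      (by fun_prop), f.lintegral_exp_neg_mul hf ht]

theorem integrable_mul_exp_neg_mul (hf : Tendsto f atBot (𝓝 0)) (ht : 0 < t)
    (hint : Integrable (fun v => exp (-t * v)) f.measure) :
    Integrable (fun s => t * exp (-t * s) * f s) := by
  have hf0 : ∀ s, 0 ≤ f s := f.mono.le_of_tendsto hf
  have hfm : Measurable f := f.mono.measurable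
  refine ⟨by fun_prop, ?_⟩
  rw [hasFiniteIntegral_iff_ofReal (ae_of_all _ fun s => by have := hf0 s; positivity),
    ← f.lintegral_exp_neg_mul hf ht]
  exact hint.lintegral_lt_top

theorem integral_exp_neg_mul_sub (g : StieltjesFunction ℝ) (hf : Tendsto f atBot (𝓝 0))
    (hg : Tendsto g atBot (𝓝 0)) (ht : 0 < t)
    (hintf : Integrable (fun v => exp (-t * v)) f.measure)
    (hintg : Integrable (fun v => exp (-t * v)) g.measure) :
    ∫ v, exp (-t * v) ∂f.measure - ∫ v, exp (-t * v) ∂g.measure =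
      ∫ s, t * exp (-t * s) * (f s - g s) := by
  simp_rw [f.integral_exp_neg_mul hf ht, g.integral_exp_neg_mul hg ht, mul_sub]
  exact (integral_sub (f.integrable_mul_exp_neg_mul hf ht hintf)
    (g.integrable_mul_exp_neg_mul hg ht hintg)).symm

theorem abs_sub_le_max (g : StieltjesFunction ℝ) (hf : Tendsto f atBot (𝓝 0))
    (hg : Tendsto g atBot (𝓝 0)) {s M : ℝ} (hs : s ≤ M) :
    |f s - g s| ≤ max (f M) (g M) :=
  abs_sub_le_of_nonneg_of_le (f.mono.le_of_tendsto hf s) ((f.mono hs).trans (le_max_left _ _))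
    (g.mono.le_of_tendsto hg s) ((g.mono hs).trans (le_max_right _ _))

end StieltjesFunction

theorem integral_mul_exp_neg_mul_eq_integral_Ioi {F : ℝ → ℝ} (hF : ∀ s < 0, F s = 0)
    {t : ℝ} (ht : 0 < t) :
    ∫ s, t * exp (-t * s) * F s = ∫ x in Ioi 0, F (x / t) * exp (-x) := by
  have hsupp : ∫ s, t * exp (-t * s) * F s = ∫ s in Ioi 0, t * exp (-t * s) * F s := by
    rw [← integral_Ici_eq_integral_Ioi]
    refine (setIntegral_eq_integral_of_forall_compl_eq_zero fun s hs => ?_).symm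
    rw [hF s (not_le.1 hs), mul_zero]
  have hscale := integral_comp_mul_left_Ioi' (fun x => F (x / t) * exp (-x)) 0 ht
  rw [mul_zero] at hscale
  rw [hsupp, ← hscale, smul_eq_mul, ← integral_const_mul]
  refine setIntegral_congr_fun measurableSet_Ioi fun s _ => ?_
  rw [mul_div_cancel_left₀ s ht.ne', neg_mul, mul_comm (F s), mul_assoc]

section Abelian

variable {F : ℝ → ℝ} {Δ c : ℝ}

theorem eventually_abs_le_mul_rpow_of_tendsto
    (hlim : Tendsto (fun Λ => Λ ^ (-Δ) * F Λ) atTop (𝓝 c)) :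
    ∀ᶠ Λ in atTop, |F Λ| ≤ (|c| + 1) * Λ ^ Δ := by
  filter_upwards [hlim.abs.eventually_lt_const (lt_add_one |c|), eventually_gt_atTop 0]
    with Λ hΛc hΛ
  calc |F Λ| = Λ ^ Δ * |Λ ^ (-Δ) * F Λ| := by
        rw [abs_mul, abs_of_pos (rpow_pos_of_pos hΛ _), ← mul_assoc, ← rpow_add hΛ,
          add_neg_cancel, rpow_zero, one_mul]
    _ ≤ Λ ^ Δ * (|c| + 1) := by gcongr
    _ = (|c| + 1) * Λ ^ Δ := mul_comm _ _

theorem rpow_mul_abs_comp_div_le {K C M t x : ℝ} (hΔ : 0 ≤ Δ) (hK : 0 ≤ K) (hC : 0 ≤ C)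
    (hFM : ∀ Λ ≥ M, |F Λ| ≤ K * Λ ^ Δ) (hFC : ∀ s ∈ Ioc 0 M, |F s| ≤ C) (ht : t ∈ Ioc 0 1)
    (hx : 0 < x) :
    t ^ Δ * |F (x / t)| ≤ C + K * x ^ Δ := by
  obtain ⟨ht0, ht1⟩ := ht
  rcases le_or_gt M (x / t) with hM | hM
  · calc t ^ Δ * |F (x / t)| ≤ t ^ Δ * (K * (x / t) ^ Δ) := by gcongr; exact hFM _ hM
      _ = K * x ^ Δ := by
        rw [div_rpow hx.le ht0.le]
        field_simp
      _ ≤ C + K * x ^ Δ := le_add_of_nonneg_left hC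
  · calc t ^ Δ * |F (x / t)| ≤ 1 * C :=
          mul_le_mul (rpow_le_one ht0.le ht1 hΔ) (hFC _ ⟨div_pos hx ht0, hM.le⟩)
            (abs_nonneg _) zero_le_one
      _ ≤ C + K * x ^ Δ := by
        rw [one_mul]
        exact le_add_of_nonneg_right (by positivity)

theorem tendsto_rpow_mul_comp_div {x : ℝ} (hx : 0 < x)
    (hlim : Tendsto (fun Λ => Λ ^ (-Δ) * F Λ) atTop (𝓝 c)) :
    Tendsto (fun t => t ^ Δ * F (x / t)) (𝓝[>] 0) (𝓝 (x ^ Δ * c)) := by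
  have hdiv : Tendsto (fun t => x / t) (𝓝[>] 0) atTop := by
    simpa only [div_eq_mul_inv] using tendsto_inv_nhdsGT_zero.const_mul_atTop hx
  refine ((hlim.comp hdiv).const_mul (x ^ Δ)).congr' ?_
  filter_upwards [self_mem_nhdsWithin] with t (ht : 0 < t)
  rw [Function.comp_apply, rpow_neg (div_pos hx ht).le, div_rpow hx.le ht.le]
  have : 0 < x ^ Δ := rpow_pos_of_pos hx Δ
  field_simp

theorem integral_rpow_mul_exp_neg (hΔ : -1 < Δ) :
    ∫ x in Ioi 0, x ^ Δ * exp (-x) = Gamma (Δ + 1) := by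
  rw [Gamma_eq_integral (by linarith), add_sub_cancel_right]
  simp_rw [mul_comm]

theorem integrableOn_rpow_mul_exp_neg (hΔ : -1 < Δ) :
    IntegrableOn (fun x => x ^ Δ * exp (-x)) (Ioi 0) := by
  simpa only [rpow_one] using integrableOn_rpow_mul_exp_neg_rpow hΔ one_pos

theorem tendsto_rpow_mul_integral_comp_div_mul_exp_neg (hF : Measurable F)
    (hbdd : ∀ M, ∃ C, ∀ s ∈ Ioc 0 M, |F s| ≤ C) (hΔ : 0 ≤ Δ)
    (hlim : Tendsto (fun Λ => Λ ^ (-Δ) * F Λ) atTop (𝓝 c)) :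
    Tendsto (fun t => t ^ Δ * ∫ x in Ioi 0, F (x / t) * exp (-x)) (𝓝[>] 0)
      (𝓝 (c * Gamma (Δ + 1))) := by
  obtain ⟨M, hM⟩ := eventually_atTop.1 (eventually_abs_le_mul_rpow_of_tendsto hlim)
  obtain ⟨C, hC⟩ := hbdd M
  have hC' : ∀ s ∈ Ioc 0 M, |F s| ≤ max C 0 := fun s hs => (hC s hs).trans (le_max_left _ _)
  have hbound_int : IntegrableOn (fun x => (max C 0 + (|c| + 1) * x ^ Δ) * exp (-x)) (Ioi 0) := by
    refine IntegrableOn.congr_fun (((integrableOn_exp_neg_Ioi 0).const_mul (max C 0)).add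
      ((integrableOn_rpow_mul_exp_neg (by linarith)).const_mul (|c| + 1)))
      (fun x _ => by simp only [Pi.add_apply]; ring) measurableSet_Ioi
  have hlimit : ∫ x in Ioi 0, x ^ Δ * c * exp (-x) = c * Gamma (Δ + 1) := by
    simp_rw [mul_right_comm _ c, integral_mul_const, integral_rpow_mul_exp_neg (by linarith),
      mul_comm]
  simp_rw [← integral_const_mul, ← hlimit, ← mul_assoc]
  refine tendsto_integral_filter_of_dominated_convergence _ ?_ ?_ hbound_int ?_
  · exact Eventually.of_forall fun t => by fun_prop
  · filter_upwards [Ioc_mem_nhdsGT one_pos] with t ht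
    refine ae_restrict_of_forall_mem measurableSet_Ioi fun x (hx : 0 < x) => ?_
    rw [norm_mul, norm_mul, Real.norm_eq_abs, Real.norm_eq_abs, Real.norm_eq_abs,
      abs_of_pos (rpow_pos_of_pos ht.1 _), abs_of_pos (exp_pos _)]
    gcongr
    exact rpow_mul_abs_comp_div_le hΔ (by positivity) (le_max_right _ _) hM hC' ht hx
  · exact ae_restrict_of_forall_mem measurableSet_Ioi fun x hx =>
      (tendsto_rpow_mul_comp_div hx hlim).mul_const _

end Abelian

/-- Abelian theorem for the Laplace–Stieltjes transform of a right-continuous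
function of (locally) bounded variation vanishing on the negatives, encoded via
its Jordan decomposition `F = f₁ - f₂` into two Stieltjes functions (monotone,
right-continuous) both vanishing on the negatives. -/
theorem abelian_laplace_stieltjes
    (f₁ f₂ : StieltjesFunction ℝ) (F : ℝ → ℝ) (hF : ∀ x, F x = f₁ x - f₂ x)
    (hneg₁ : ∀ x < (0 : ℝ), f₁ x = 0) (hneg₂ : ∀ x < (0 : ℝ), f₂ x = 0)
    (hint₁ : ∀ t : ℝ, 0 < t → Integrable (fun v => Real.exp (-t * v)) f₁.measure)
    (hint₂ : ∀ t : ℝ, 0 < t → Integrable (fun v => Real.exp (-t * v)) f₂.measure)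
    (Δ : ℝ) (hΔ : 0 < Δ)
    (hlim : Tendsto (fun Λ : ℝ => Λ ^ (-Δ) * Real.Gamma (Δ + 1) * F Λ) atTop (𝓝 1)) :
    Tendsto (fun t : ℝ =>
        t ^ Δ * ((∫ v, Real.exp (-t * v) ∂f₁.measure) - ∫ v, Real.exp (-t * v) ∂f₂.measure))
      (𝓝[>] (0 : ℝ)) (𝓝 1) := by
  have hbot₁ : Tendsto f₁ atBot (𝓝 0) := EventuallyEq.tendsto <| (eventually_lt_atBot 0).mono hneg₁
  have hbot₂ : Tendsto f₂ atBot (𝓝 0) := EventuallyEq.tendsto <| (eventually_lt_atBot 0).mono hneg₂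
  have hFm : Measurable F := by
    rw [funext hF]
    exact f₁.mono.measurable.sub f₂.mono.measurable
  have hbdd : ∀ M, ∃ C, ∀ s ∈ Ioc 0 M, |F s| ≤ C := fun M =>
    ⟨max (f₁ M) (f₂ M), fun s hs => hF s ▸ f₁.abs_sub_le_max f₂ hbot₁ hbot₂ hs.2⟩
  have hFneg : ∀ s < 0, F s = 0 := fun s hs => by rw [hF, hneg₁ s hs, hneg₂ s hs, sub_zero]
  have hΓ : Real.Gamma (Δ + 1) ≠ 0 := (Real.Gamma_pos_of_pos (by linarith)).ne'
  have hlim' : Tendsto (fun Λ => Λ ^ (-Δ) * F Λ) atTop (𝓝 (Real.Gamma (Δ + 1))⁻¹) := by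
    convert hlim.const_mul (Real.Gamma (Δ + 1))⁻¹ using 2 with Λ
    · field_simp
    · rw [mul_one]
  have habel := tendsto_rpow_mul_integral_comp_div_mul_exp_neg hFm hbdd hΔ.le hlim'
  rw [inv_mul_cancel₀ hΓ] at habel
  refine habel.congr' ?_
  filter_upwards [self_mem_nhdsWithin] with t (ht : 0 < t)
  simp_rw [f₁.integral_exp_neg_mul_sub f₂ hbot₁ hbot₂ ht (hint₁ t ht) (hint₂ t ht), ← hF,
    integral_mul_exp_neg_mul_eq_integral_Ioi hFneg ht]
end

section
/- Let Δ > 0 and suppose G(z, z̄) = z^{-Δ} z̄^{-Δ} Σ_k Σ_{j=0}^{l_k} c_{k,j} z^{(E_k−l_k)/2 + j} z̄^{(E_k+l_k)/2 − j} with c_{k,j} ≥ 0, E_k ≥ 0, the k = 0 term being 1 (E_0 = 0, l_0 = 0, c_{0,0} = 1), and suppose the double sum converges absolutely for 0 < |z|, |z̄| < 1. If G(z, z̄) = G(1−z, 1−z̄) and the twist gap inf_{k>0}(E_k − l_k) = 2ĥ > 0 holds, then for fixed z with 0 < |1−z| < 1, (1 − z̄)^Δ G(z, z̄) → (1−z)^{-Δ}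 as z̄ → 1⁻ along the reals, with error O((1−z̄)^{ĥ}). -/
open Filter Topology

/-- t-channel identity dominance in the lightcone limit: for a crossing-symmetric
function with a positive, discrete, twist-gapped monomial decomposition whose
`k = 0` term is the identity, `(1-z̄)^Δ G(z,z̄) → (1-z)^{-Δ}` as `z̄ → 1⁻` with
error `O((1-z̄)^hHat)`. -/
theorem lightcone_identity_dominance
    (Δ : ℝ) (hΔ : 0 < Δ) (l : ℕ → ℕ) (E : ℕ → ℝ) (c : ℕ → ℕ → ℝ)
    (hc : ∀ k j, 0 ≤ c k j) (hE : ∀ k, 0 ≤ E k)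
    (hsym : ∀ k, ∀ j ≤ l k, c k j = c k (l k - j))
    (hE0 : E 0 = 0) (hl0 : l 0 = 0) (hc00 : c 0 0 = 1)
    (hdisc : Tendsto E atTop atTop)
    (hHat : ℝ) (hgap : 0 < hHat)
    (htwist : IsGLB {x : ℝ | ∃ k : ℕ, 0 < k ∧ x = E k - l k} (2 * hHat))
    (G : ℂ → ℂ → ℂ)
    (hsum : ∀ z zb : ℂ, 0 < ‖z‖ → ‖z‖ < 1 → 0 < ‖zb‖ → ‖zb‖ < 1 →
      Summable (fun p : (k : ℕ) × Fin (l k + 1) =>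
        ‖(c p.1 p.2 : ℂ) * z ^ (((E p.1 - l p.1) / 2 + (p.2 : ℕ) : ℝ) : ℂ) *
          zb ^ (((E p.1 + l p.1) / 2 - (p.2 : ℕ) : ℝ) : ℂ)‖) ∧
      G z zb = z ^ (-Δ : ℂ) * zb ^ (-Δ : ℂ) *
        ∑' p : (k : ℕ) × Fin (l k + 1),
          (c p.1 p.2 : ℂ) * z ^ (((E p.1 - l p.1) / 2 + (p.2 : ℕ) : ℝ) : ℂ) *
            zb ^ (((E p.1 + l p.1) / 2 - (p.2 : ℕ) : ℝ) : ℂ))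
    (hcross : ∀ z zb : ℂ, 0 < ‖z‖ → ‖z‖ < 1 → 0 < ‖zb‖ → ‖zb‖ < 1 →
      0 < ‖1 - z‖ → ‖1 - z‖ < 1 → 0 < ‖1 - zb‖ → ‖1 - zb‖ < 1 →
      G z zb = G (1 - z) (1 - zb))
    (z : ℂ) (hz0 : 0 < ‖z‖) (hz1 : ‖z‖ < 1)
    (hz2 : 0 < ‖1 - z‖) (hz3 : ‖1 - z‖ < 1) :
    ∃ C : ℝ, 0 < C ∧ ∃ δ : ℝ, 0 < δ ∧ δ < 1 ∧ ∀ zb : ℝ, 1 - δ < zb → zb < 1 →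
      ‖(((1 - zb) ^ Δ : ℝ) : ℂ) * G z (zb : ℂ) - (1 - z) ^ (-Δ : ℂ)‖
        ≤ C * (1 - zb) ^ hHat := by
  classical
  -- basic facts about z
  have hwne : (1 - z) ≠ 0 := by
    intro h; rw [h] at hz2; simp at hz2
  -- summability at wb = 1/2 gives the constant M
  have hhalf0 : (0:ℝ) < ‖((1/2:ℝ):ℂ)‖ := by
    rw [Complex.norm_real]; norm_num
  have hhalf1 : ‖((1/2:ℝ):ℂ)‖ < 1 := by
    rw [Complex.norm_real]; norm_num
  obtain ⟨hMsum, -⟩ := hsum (1 - z) ((1/2:ℝ):ℂ) hz2 hz3 hhalf0 hhalf1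
  set N : (k : ℕ) × Fin (l k + 1) → ℝ := fun p =>
    ‖(c p.1 p.2 : ℂ) * (1 - z) ^ (((E p.1 - l p.1) / 2 + (p.2 : ℕ) : ℝ) : ℂ) *
      ((1/2:ℝ):ℂ) ^ (((E p.1 + l p.1) / 2 - (p.2 : ℕ) : ℝ) : ℂ)‖ with hN
  set M : ℝ := ∑' p, N p with hMdef
  have hM0 : 0 ≤ M := tsum_nonneg fun p => norm_nonneg _
  set D : ℝ := ‖(1 - z) ^ (-Δ : ℂ)‖ with hD
  have hD0 : 0 ≤ D := norm_nonneg _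
  refine ⟨D * M * (2:ℝ) ^ hHat + 1, by positivity, 1/2, by norm_num, by norm_num, ?_⟩
  intro zb hzb1 hzb2
  set wbr : ℝ := 1 - zb with hwbr
  have hw0 : 0 < wbr := by simp only [hwbr]; linarith
  have hw2 : wbr < 1/2 := by simp only [hwbr]; linarith
  have hwne' : ((wbr:ℝ):ℂ) ≠ 0 := by
    exact_mod_cast ne_of_gt hw0
  have hcast : (1 : ℂ) - (zb:ℂ) = ((wbr:ℝ):ℂ) := by
    simp [hwbr]
  -- crossing
  have hzb0 : (0:ℝ) < ‖(zb:ℂ)‖ := by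
    rw [Complex.norm_real, Real.norm_eq_abs, abs_of_pos (by linarith)]; linarith
  have hzb1' : ‖(zb:ℂ)‖ < 1 := by
    rw [Complex.norm_real, Real.norm_eq_abs, abs_of_pos (by linarith)]; linarith
  have hwb0 : (0:ℝ) < ‖(1:ℂ) - (zb:ℂ)‖ := by
    rw [hcast, Complex.norm_real, Real.norm_eq_abs, abs_of_pos hw0]; exact hw0
  have hwb1 : ‖(1:ℂ) - (zb:ℂ)‖ < 1 := by
    rw [hcast, Complex.norm_real, Real.norm_eq_abs, abs_of_pos hw0]; linarith
  have hcr : G z (zb:ℂ) = G (1 - z) ((wbr:ℝ):ℂ) := by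
    rw [hcross z (zb:ℂ) hz0 hz1 hzb0 hzb1' hz2 hz3 hwb0 hwb1, hcast]
  obtain ⟨hSsum, hGeq⟩ := hsum (1 - z) ((wbr:ℝ):ℂ) hz2 hz3
    (by rw [Complex.norm_real, Real.norm_eq_abs, abs_of_pos hw0]; exact hw0)
    (by rw [Complex.norm_real, Real.norm_eq_abs, abs_of_pos hw0]; linarith)
  set f : (k : ℕ) × Fin (l k + 1) → ℂ := fun p =>
    (c p.1 p.2 : ℂ) * (1 - z) ^ (((E p.1 - l p.1) / 2 + (p.2 : ℕ) : ℝ) : ℂ) *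
      ((wbr:ℝ):ℂ) ^ (((E p.1 + l p.1) / 2 - (p.2 : ℕ) : ℝ) : ℂ) with hfdef
  have hfsummable : Summable f := Summable.of_norm hSsum
  set p₀ : (k : ℕ) × Fin (l k + 1) := ⟨0, ⟨0, by omega⟩⟩ with hp₀
  have hfp0 : f p₀ = 1 := by
    simp [hfdef, hp₀, hE0, hl0, hc00]
  -- per-term bound for the tail
  have hle : ∀ p, ‖(if p = p₀ then 0 else f p)‖ ≤ (2*wbr) ^ hHat * N p := by
    intro p
    by_cases hp : p = p₀
    · rw [if_pos hp]
      simp only [norm_zero]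
      positivity
    · rw [if_neg hp]
      have hk : 0 < p.1 := by
        by_contra h
        apply hp
        obtain ⟨k, j⟩ := p
        simp only [not_lt, Nat.le_zero] at h
        subst h
        have hj : (j:ℕ) = 0 := by omega
        simp only [hp₀, Sigma.mk.inj_iff, heq_eq_eq, true_and]
        exact Fin.ext hj
      have htw : 2 * hHat ≤ E p.1 - l p.1 :=
        htwist.1 ⟨p.1, hk, rfl⟩
      have hjle : ((p.2:ℕ):ℝ) ≤ (l p.1 : ℝ) := by
        exact_mod_cast Nat.lt_succ_iff.mp p.2.isLt
      set hb : ℝ := (E p.1 + l p.1) / 2 - (p.2:ℕ) with hhb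
      have hbge : hHat ≤ hb := by
        simp only [hhb]; linarith
      have hnormw : ‖((wbr:ℝ):ℂ) ^ ((hb:ℝ):ℂ)‖ = wbr ^ hb := by
        rw [← Complex.ofReal_cpow hw0.le, Complex.norm_real,
          Real.norm_eq_abs, abs_of_nonneg (Real.rpow_nonneg hw0.le _)]
      have hnormh : ‖((1/2:ℝ):ℂ) ^ ((hb:ℝ):ℂ)‖ = (1/2:ℝ) ^ hb := by
        rw [← Complex.ofReal_cpow (by norm_num : (0:ℝ) ≤ 1/2), Complex.norm_real,
          Real.norm_eq_abs, abs_of_nonneg (Real.rpow_nonneg (by norm_num) _)]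
      have hkey : wbr ^ hb ≤ (1/2:ℝ) ^ hb * (2*wbr) ^ hHat := by
        have h1 : wbr ^ hb = (1/2:ℝ) ^ hb * (2*wbr) ^ hb := by
          rw [← Real.mul_rpow (by norm_num) (by positivity)]
          congr 1
          ring
        have h2 : (2*wbr) ^ hb ≤ (2*wbr) ^ hHat :=
          Real.rpow_le_rpow_of_exponent_ge (by linarith) (by linarith) hbge
        rw [h1]
        exact mul_le_mul_of_nonneg_left h2 (Real.rpow_nonneg (by norm_num) _)
      calc ‖f p‖ = ‖(c p.1 p.2 : ℂ) * (1 - z) ^ (((E p.1 - l p.1) / 2 + (p.2 : ℕ) : ℝ) : ℂ)‖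
            * (wbr ^ hb) := by
              rw [hfdef]; simp only [norm_mul]; rw [← hnormw]
        _ ≤ ‖(c p.1 p.2 : ℂ) * (1 - z) ^ (((E p.1 - l p.1) / 2 + (p.2 : ℕ) : ℝ) : ℂ)‖
            * ((1/2:ℝ) ^ hb * (2*wbr) ^ hHat) :=
              mul_le_mul_of_nonneg_left hkey (norm_nonneg _)
        _ = (2*wbr) ^ hHat * N p := by
              rw [hN]; simp only [norm_mul]; rw [hnormh]; ring
  have hmaj : Summable (fun p => (2*wbr) ^ hHat * N p) := hMsum.mul_left _
  have hitesum : Summable (fun p => ‖(if p = p₀ then 0 else f p)‖) :=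
    Summable.of_nonneg_of_le (fun p => norm_nonneg _) hle hmaj
  have htail : ‖∑' p, (if p = p₀ then 0 else f p)‖ ≤ (2*wbr) ^ hHat * M := by
    calc ‖∑' p, (if p = p₀ then 0 else f p)‖
        ≤ ∑' p, ‖(if p = p₀ then 0 else f p)‖ := norm_tsum_le_tsum_norm hitesum
      _ ≤ ∑' p, (2*wbr) ^ hHat * N p := Summable.tsum_le_tsum hle hitesum hmaj
      _ = (2*wbr) ^ hHat * M := by rw [hMdef, tsum_mul_left]
  -- rewrite the left-hand side
  have hpow1 : ((wbr:ℝ):ℂ) ^ ((Δ:ℝ):ℂ) * ((wbr:ℝ):ℂ) ^ (-Δ:ℂ) = 1 := by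
    rw [← Complex.cpow_add _ _ hwne']
    simp
  have hGz : (((1 - zb) ^ Δ : ℝ) : ℂ) * G z (zb:ℂ) =
      (1 - z) ^ (-Δ:ℂ) * ∑' p, f p := by
    rw [hcr, hGeq, ← hwbr, Complex.ofReal_cpow hw0.le]
    calc ((wbr:ℝ):ℂ) ^ ((Δ:ℝ):ℂ) * ((1 - z) ^ (-Δ:ℂ) * ((wbr:ℝ):ℂ) ^ (-Δ:ℂ) * ∑' p, f p)
        = (((wbr:ℝ):ℂ) ^ ((Δ:ℝ):ℂ) * ((wbr:ℝ):ℂ) ^ (-Δ:ℂ)) *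
            ((1 - z) ^ (-Δ:ℂ) * ∑' p, f p) := by ring
      _ = (1 - z) ^ (-Δ:ℂ) * ∑' p, f p := by rw [hpow1, one_mul]
  have hsplit : (∑' p, f p) - 1 = ∑' p, (if p = p₀ then 0 else f p) := by
    rw [Summable.tsum_eq_add_tsum_ite hfsummable p₀, hfp0]
    ring
  have hdiff : (((1 - zb) ^ Δ : ℝ) : ℂ) * G z (zb:ℂ) - (1 - z) ^ (-Δ:ℂ) =
      (1 - z) ^ (-Δ:ℂ) * ((∑' p, f p) - 1) := by
    rw [hGz]; ring
  rw [hdiff, norm_mul, hsplit, ← hD]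
  have h2w : (2*wbr) ^ hHat = (2:ℝ) ^ hHat * wbr ^ hHat :=
    Real.mul_rpow (by norm_num) hw0.le
  have hwbrHat : (0:ℝ) ≤ wbr ^ hHat := Real.rpow_nonneg hw0.le _
  calc D * ‖∑' p, (if p = p₀ then 0 else f p)‖
      ≤ D * ((2*wbr) ^ hHat * M) := mul_le_mul_of_nonneg_left htail hD0
    _ = (D * M * (2:ℝ) ^ hHat) * wbr ^ hHat := by rw [h2w]; ring
    _ ≤ (D * M * (2:ℝ) ^ hHat + 1) * wbr ^ hHat := by nlinarith
    _ = (D * M * (2:ℝ) ^ hHat + 1) * (1 - zb) ^ hHat := by rw [← hwbr]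
end
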